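/- arXiv:math/0411114 — 3 statements merged into one kernel-verified Lean document; each statement's English description precedes it below -/
import Mathlib

section
/- The maximum of Λ(A) + Λ(B) + Λ(C) over triples of nonnegative reals A, B, C with A + B + C = π is attained exactly at A = B = C = π/3. -/
open Real

/-- The Lobachevsky function `Λ(θ) = -∫₀^θ log |2 sin t| dt`. -/
noncomputable def lobachevsky (θ : ℝ) : ℝ := -∫ t in (0:ℝ)..θ, Real.log |2 * Real.sin t|

namespace LobachevskyAux

open MeasureTheory intervalIntegral Set

noncomputable abbrev f (t : ℝ) : ℝ := Real.log |2 * Real.sin t|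

lemma f_meas : Measurable f :=
  Real.measurable_log.comp (measurable_sin.const_mul 2).abs

lemma f_eq {t : ℝ} (h1 : 0 < t) (h2 : t < π) :
    f t = Real.log 2 + Real.log (Real.sin t) := by
  have hs : 0 < Real.sin t := Real.sin_pos_of_pos_of_lt_pi h1 h2
  rw [f, abs_of_pos (by linarith), Real.log_mul (by norm_num) hs.ne']

lemma integrable_first : IntervalIntegrable f volume 0 (π / 2) := by
  have hpi : (0:ℝ) < π := Real.pi_pos
  rw [intervalIntegrable_iff_integrableOn_Ioc_of_le (by linarith)]
  have hg : IntegrableOn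
      (fun t : ℝ => (Real.log 2 + Real.log (π / 2)) + 2 * t ^ (-(1/2) : ℝ))
      (Ioc 0 (π / 2)) volume := by
    apply Integrable.add
    · exact integrableOn_const measure_Ioc_lt_top.ne
    · have := (intervalIntegrable_rpow' (a := 0) (b := π / 2)
        (r := -(1/2)) (by norm_num))
      rw [intervalIntegrable_iff_integrableOn_Ioc_of_le (by linarith)] at this
      exact this.const_mul 2
  refine Integrable.mono hg (f_meas.aestronglyMeasurable.restrict) ?_
  rw [ae_restrict_iff' measurableSet_Ioc]
  refine ae_of_all _ fun t ht => ?_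
  obtain ⟨ht0, ht1⟩ := ht
  have htpi : t < π := lt_of_le_of_lt ht1 (by linarith)
  have hs : 0 < Real.sin t := Real.sin_pos_of_pos_of_lt_pi ht0 htpi
  have hsle : Real.sin t ≤ 1 := Real.sin_le_one t
  have hlow : 2 / π * t ≤ Real.sin t := Real.mul_le_sin ht0.le ht1
  -- bound: ‖f t‖ ≤ log 2 - log (sin t) ≤ log 2 + log (π/2) - log t ≤ RHS
  have h1 : |f t| ≤ Real.log 2 + (- Real.log (Real.sin t)) := by
    rw [f_eq ht0 htpi]
    have hls : Real.log (Real.sin t) ≤ 0 := Real.log_nonpos hs.le hsle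
    have hl2 : (0:ℝ) ≤ Real.log 2 := Real.log_nonneg (by norm_num)
    rw [abs_le]; constructor <;> nlinarith [abs_nonneg (Real.log 2 + Real.log (Real.sin t))]
  have h2 : - Real.log (Real.sin t) ≤ Real.log (π / 2) - Real.log t := by
    have : Real.log (2 / π * t) ≤ Real.log (Real.sin t) :=
      Real.log_le_log (by positivity) hlow
    have he : Real.log (2 / π * t) = Real.log (2 / π) + Real.log t :=
      Real.log_mul (by positivity) ht0.ne'
    have hd : Real.log (2 / π) = - Real.log (π / 2) := by
      rw [← Real.log_inv]; norm_num
    rw [he, hd] at this; linarith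
  have h3 : - Real.log t ≤ 2 * t ^ (-(1/2) : ℝ) := by
    have hr : Real.log (t ^ (-(1/2) : ℝ)) = -(1/2) * Real.log t :=
      Real.log_rpow ht0 _
    have := Real.log_le_sub_one_of_pos (x := t ^ (-(1/2) : ℝ)) (by positivity)
    have hp : (0:ℝ) < t ^ (-(1/2) : ℝ) := by positivity
    nlinarith
  have hg0 : (0:ℝ) ≤ (Real.log 2 + Real.log (π / 2)) + 2 * t ^ (-(1/2) : ℝ) := by
    have : (0:ℝ) ≤ Real.log 2 := Real.log_nonneg (by norm_num)
    have : (0:ℝ) ≤ Real.log (π / 2) := Real.log_nonneg (by linarith [Real.pi_gt_three])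
    positivity
  rw [Real.norm_eq_abs, Real.norm_eq_abs, abs_of_nonneg hg0]
  linarith

lemma integrable_second : IntervalIntegrable f volume (π / 2) π := by
  have h := integrable_first.comp_sub_left π
  have he : (fun x => f (π - x)) = f := by
    funext x; simp only [f, Real.sin_pi_sub]
  rw [he] at h
  have e1 : π - (0:ℝ) = π := by ring
  have e2 : π - π / 2 = π / 2 := by ring
  rw [e1, e2] at h
  exact h.symm

lemma integrable_zero_pi : IntervalIntegrable f volume 0 π :=
  integrable_first.trans integrable_second

lemma integrable_of_mem {a b : ℝ} (ha : a ∈ Icc (0:ℝ) π) (hb : b ∈ Icc (0:ℝ) π) :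
    IntervalIntegrable f volume a b := by
  apply integrable_zero_pi.mono_set
  rw [uIcc_of_le Real.pi_pos.le]
  exact uIcc_subset_Icc ha hb

lemma cont : ContinuousOn lobachevsky (Icc 0 π) := by
  have h : IntegrableOn f (uIcc 0 π) volume := by
    rw [uIcc_of_le Real.pi_pos.le,
      ← intervalIntegrable_iff_integrableOn_Icc_of_le Real.pi_pos.le]
    exact integrable_zero_pi
  have := (continuousOn_primitive_interval h).neg
  rwa [uIcc_of_le Real.pi_pos.le] at this

lemma hasDeriv {θ : ℝ} (h : θ ∈ Ioo (0:ℝ) π) :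
    HasDerivAt lobachevsky (-Real.log (2 * Real.sin θ)) θ := by
  obtain ⟨h0, h1⟩ := h
  have hs : 0 < Real.sin θ := Real.sin_pos_of_pos_of_lt_pi h0 h1
  have hint : IntervalIntegrable f volume 0 θ :=
    integrable_of_mem ⟨le_refl 0, Real.pi_pos.le⟩ ⟨h0.le, h1.le⟩
  have hmeas : StronglyMeasurableAtFilter f (nhds θ) :=
    ⟨Set.univ, Filter.univ_mem, f_meas.aestronglyMeasurable.restrict⟩
  have hcont : ContinuousAt f θ := by
    apply (Real.continuousAt_log ?_).comp
    · exact ((continuous_const.mul continuous_sin).abs).continuousAt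
    · simp only [abs_ne_zero]
      positivity
  have := (integral_hasDerivAt_right hint hmeas hcont).neg
  have he : f θ = Real.log (2 * Real.sin θ) := by
    rw [f, abs_of_pos (by linarith)]
  rw [he] at this
  exact this

lemma sin_le_sin {x y : ℝ} (hx : 0 ≤ x) (hxy : x ≤ y) (hsum : x + y ≤ π) :
    Real.sin x ≤ Real.sin y := by
  have hpi : (0:ℝ) < π := Real.pi_pos
  rcases le_total y (π / 2) with h | h
  · exact Real.strictMonoOn_sin.monotoneOn ⟨by linarith, by linarith⟩
      ⟨by linarith, h⟩ hxy
  · rw [← Real.sin_pi_sub y]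
    exact Real.strictMonoOn_sin.monotoneOn ⟨by linarith, by linarith⟩
      ⟨by linarith, by linarith⟩ (by linarith)

lemma sin_lt_sin {x y : ℝ} (hx : 0 ≤ x) (hxy : x < y) (hsum : x + y < π) :
    Real.sin x < Real.sin y := by
  have hpi : (0:ℝ) < π := Real.pi_pos
  rcases le_total y (π / 2) with h | h
  · exact Real.strictMonoOn_sin ⟨by linarith, by linarith⟩ ⟨by linarith, h⟩ hxy
  · rw [← Real.sin_pi_sub y]
    exact Real.strictMonoOn_sin ⟨by linarith, by linarith⟩
      ⟨by linarith, by linarith⟩ (by linarith)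

section Key

variable {A C t : ℝ}

lemma mem_bounds (hA : 0 ≤ A) (ht : 0 ≤ t) (h1 : A + t ≤ C - t) (h2 : A + C ≤ π)
    {s : ℝ} (hs : s ∈ Icc 0 t) :
    A + s ∈ Icc (0:ℝ) π ∧ C - s ∈ Icc (0:ℝ) π := by
  obtain ⟨hs0, hst⟩ := hs
  constructor <;> constructor <;> linarith

lemma phi_cont (hA : 0 ≤ A) (ht : 0 ≤ t) (h1 : A + t ≤ C - t) (h2 : A + C ≤ π) :
    ContinuousOn (fun s => lobachevsky (A + s) + lobachevsky (C - s)) (Icc 0 t) := by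
  apply ContinuousOn.add
  · exact cont.comp (continuous_const.add continuous_id).continuousOn
      (fun s hs => (mem_bounds hA ht h1 h2 hs).1)
  · exact cont.comp (continuous_const.sub continuous_id).continuousOn
      (fun s hs => (mem_bounds hA ht h1 h2 hs).2)

lemma phi_hasDeriv (hA : 0 ≤ A) (h1 : A + t ≤ C - t) (h2 : A + C ≤ π)
    {s : ℝ} (hs : s ∈ Ioo 0 t) :
    HasDerivAt (fun s => lobachevsky (A + s) + lobachevsky (C - s))
      (Real.log (2 * Real.sin (C - s)) - Real.log (2 * Real.sin (A + s))) s := by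
  obtain ⟨hs0, hst⟩ := hs
  have hAs : A + s ∈ Ioo (0:ℝ) π := ⟨by linarith, by linarith⟩
  have hCs : C - s ∈ Ioo (0:ℝ) π := ⟨by linarith, by linarith⟩
  have d1 : HasDerivAt (fun s => lobachevsky (A + s))
      (-Real.log (2 * Real.sin (A + s))) s := by
    have hi : HasDerivAt (fun s : ℝ => A + s) 1 s := (hasDerivAt_id s).const_add A
    have := (hasDeriv hAs).comp s hi
    simpa [Function.comp_def] using this
  have d2 : HasDerivAt (fun s => lobachevsky (C - s))
      (Real.log (2 * Real.sin (C - s))) s := by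
    have hi : HasDerivAt (fun s : ℝ => C - s) (-1) s := by
      simpa using (hasDerivAt_id s).const_sub C
    have := (hasDeriv hCs).comp s hi
    simpa [Function.comp_def] using this
  have := d1.add d2
  rw [show Real.log (2 * Real.sin (C - s)) - Real.log (2 * Real.sin (A + s)) =
    -Real.log (2 * Real.sin (A + s)) + Real.log (2 * Real.sin (C - s)) by ring]
  exact this

lemma key (hA : 0 ≤ A) (ht : 0 ≤ t) (h1 : A + t ≤ C - t) (h2 : A + C ≤ π) :
    lobachevsky A + lobachevsky C ≤ lobachevsky (A + t) + lobachevsky (C - t) := by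
  set φ : ℝ → ℝ := fun s => lobachevsky (A + s) + lobachevsky (C - s) with hφ
  have hmono : MonotoneOn φ (Icc 0 t) := by
    apply monotoneOn_of_deriv_nonneg (convex_Icc 0 t) (phi_cont hA ht h1 h2)
    · intro s hs
      rw [interior_Icc] at hs
      exact (phi_hasDeriv hA h1 h2 hs).differentiableAt.differentiableWithinAt
    · intro s hs
      rw [interior_Icc] at hs
      rw [(phi_hasDeriv hA h1 h2 hs).deriv]
      obtain ⟨hs0, hst⟩ := hs
      have hAs : (0:ℝ) < A + s := by linarith
      have hle : Real.sin (A + s) ≤ Real.sin (C - s) :=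
        sin_le_sin hAs.le (by linarith) (by linarith)
      have hsp : 0 < Real.sin (A + s) :=
        Real.sin_pos_of_pos_of_lt_pi hAs (by linarith)
      have := Real.log_le_log (by linarith) (by linarith : 2 * Real.sin (A + s) ≤ 2 * Real.sin (C - s))
      linarith
  have h0 : (0:ℝ) ∈ Icc (0:ℝ) t := ⟨le_refl 0, ht⟩
  have htm : t ∈ Icc (0:ℝ) t := ⟨ht, le_refl t⟩
  have := hmono h0 htm ht
  simpa [hφ] using this

lemma key_strict (hA : 0 ≤ A) (ht : 0 < t) (h1 : A + t ≤ C - t) (h2 : A + C < π) :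
    lobachevsky A + lobachevsky C < lobachevsky (A + t) + lobachevsky (C - t) := by
  set φ : ℝ → ℝ := fun s => lobachevsky (A + s) + lobachevsky (C - s) with hφ
  have hmono : StrictMonoOn φ (Icc 0 t) := by
    apply strictMonoOn_of_deriv_pos (convex_Icc 0 t) (phi_cont hA ht.le h1 h2.le)
    · intro s hs
      rw [interior_Icc] at hs
      rw [(phi_hasDeriv hA h1 h2.le hs).deriv]
      obtain ⟨hs0, hst⟩ := hs
      have hAs : (0:ℝ) < A + s := by linarith
      have hlt : Real.sin (A + s) < Real.sin (C - s) :=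
        sin_lt_sin hAs.le (by linarith) (by linarith)
      have hsp : 0 < Real.sin (A + s) :=
        Real.sin_pos_of_pos_of_lt_pi hAs (by linarith)
      have := Real.log_lt_log (by linarith) (by linarith : 2 * Real.sin (A + s) < 2 * Real.sin (C - s))
      linarith
  have h0 : (0:ℝ) ∈ Icc (0:ℝ) t := ⟨le_refl 0, ht.le⟩
  have htm : t ∈ Icc (0:ℝ) t := ⟨ht.le, le_refl t⟩
  have := hmono h0 htm ht
  simpa [hφ] using this

end Key

lemma main_sorted {A B C : ℝ} (hA : 0 ≤ A) (hAB : A ≤ B) (hBC : B ≤ C)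
    (hsum : A + B + C = π) :
    lobachevsky A + lobachevsky B + lobachevsky C ≤ 3 * lobachevsky (π / 3) ∧
    (lobachevsky A + lobachevsky B + lobachevsky C = 3 * lobachevsky (π / 3) →
      A = π / 3 ∧ B = π / 3 ∧ C = π / 3) := by
  have hpi : (0:ℝ) < π := Real.pi_pos
  have hB : (0:ℝ) ≤ B := le_trans hA hAB
  have hC : (0:ℝ) ≤ C := le_trans hB hBC
  have hA3 : A ≤ π / 3 := by linarith
  have hC3 : π / 3 ≤ C := by linarith
  -- main bound together with strictness in non-equal case
  have hmain : lobachevsky A + lobachevsky B + lobachevsky C ≤ 3 * lobachevsky (π / 3) ∧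
      (A < π / 3 → π / 3 < C →
        lobachevsky A + lobachevsky B + lobachevsky C < 3 * lobachevsky (π / 3)) := by
    rcases le_total B (π / 3) with hB3 | hB3
    · -- pair (B, C) first, then (A, 2π/3 - A)
      have step1 : lobachevsky B + lobachevsky C ≤
          lobachevsky (B + (π / 3 - B)) + lobachevsky (C - (π / 3 - B)) :=
        key hB (by linarith) (by linarith) (by linarith)
      have e1 : B + (π / 3 - B) = π / 3 := by ring
      have e2 : C - (π / 3 - B) = 2 * π / 3 - A := by linarith
      rw [e1, e2] at step1
      have step2 : lobachevsky A + lobachevsky (2 * π / 3 - A) ≤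
          lobachevsky (A + (π / 3 - A)) + lobachevsky ((2 * π / 3 - A) - (π / 3 - A)) :=
        key hA (by linarith) (by linarith) (by linarith)
      have e3 : A + (π / 3 - A) = π / 3 := by ring
      have e4 : (2 * π / 3 - A) - (π / 3 - A) = π / 3 := by ring
      rw [e3, e4] at step2
      refine ⟨by linarith, fun hlt _ => ?_⟩
      have step2' : lobachevsky A + lobachevsky (2 * π / 3 - A) <
          lobachevsky (A + (π / 3 - A)) + lobachevsky ((2 * π / 3 - A) - (π / 3 - A)) :=
        key_strict hA (by linarith) (by linarith) (by linarith)
      rw [e3, e4] at step2'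
      linarith
    · -- pair (A, B) first, then (2π/3 - C, C)
      have step1 : lobachevsky A + lobachevsky B ≤
          lobachevsky (A + (B - π / 3)) + lobachevsky (B - (B - π / 3)) :=
        key hA (by linarith) (by linarith) (by linarith)
      have e1 : A + (B - π / 3) = 2 * π / 3 - C := by linarith
      have e2 : B - (B - π / 3) = π / 3 := by ring
      rw [e1, e2] at step1
      have h2C : 0 ≤ 2 * π / 3 - C := by linarith
      have step2 : lobachevsky (2 * π / 3 - C) + lobachevsky C ≤
          lobachevsky ((2 * π / 3 - C) + (C - π / 3)) + lobachevsky (C - (C - π / 3)) :=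
        key h2C (by linarith) (by linarith) (by linarith)
      have e3 : (2 * π / 3 - C) + (C - π / 3) = π / 3 := by ring
      have e4 : C - (C - π / 3) = π / 3 := by ring
      rw [e3, e4] at step2
      refine ⟨by linarith, fun _ hlt => ?_⟩
      have step2' : lobachevsky (2 * π / 3 - C) + lobachevsky C <
          lobachevsky ((2 * π / 3 - C) + (C - π / 3)) + lobachevsky (C - (C - π / 3)) :=
        key_strict h2C (by linarith) (by linarith) (by linarith)
      rw [e3, e4] at step2'
      linarith
  refine ⟨hmain.1, fun heq => ?_⟩
  by_contra hne
  have hAlt : A < π / 3 := by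
    rcases eq_or_lt_of_le hA3 with h | h
    · exfalso; exact hne ⟨h, by linarith, by linarith⟩
    · exact h
  have hClt : π / 3 < C := by
    rcases eq_or_lt_of_le hC3 with h | h
    · exfalso; exact hne ⟨by linarith, by linarith, h.symm⟩
    · exact h
  exact absurd heq (ne_of_lt (hmain.2 hAlt hClt))

end LobachevskyAux

/-- Over nonnegative triples `A, B, C` with `A + B + C = π`, the quantity
`Λ(A) + Λ(B) + Λ(C)` (the volume of the ideal tetrahedron with dihedral angles `A, B, C`)
is maximal exactly at `A = B = C = π/3`. -/
theorem lobachevsky_sum_max (A B C : ℝ) (hA : 0 ≤ A) (hB : 0 ≤ B) (hC : 0 ≤ C)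
    (hsum : A + B + C = π) :
    lobachevsky A + lobachevsky B + lobachevsky C ≤ 3 * lobachevsky (π / 3) ∧
    (lobachevsky A + lobachevsky B + lobachevsky C = 3 * lobachevsky (π / 3) ↔
      A = π / 3 ∧ B = π / 3 ∧ C = π / 3) := by
  have hback : (A = π / 3 ∧ B = π / 3 ∧ C = π / 3) →
      lobachevsky A + lobachevsky B + lobachevsky C = 3 * lobachevsky (π / 3) := by
    rintro ⟨h1, h2, h3⟩
    rw [h1, h2, h3]; ring
  rcases le_total A B with hab | hab <;> rcases le_total B C with hbc | hbc <;>
    rcases le_total A C with hac | hac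
  · obtain ⟨h1, h2⟩ := LobachevskyAux.main_sorted hA hab hbc hsum
    exact ⟨by linarith, ⟨fun h => h2 (by linarith), hback⟩⟩
  · obtain ⟨h1, h2⟩ := LobachevskyAux.main_sorted hA hab hbc hsum
    exact ⟨by linarith, ⟨fun h => h2 (by linarith), hback⟩⟩
  · obtain ⟨h1, h2⟩ := LobachevskyAux.main_sorted hA hac hbc (by linarith)
    refine ⟨by linarith, ⟨fun h => ?_, hback⟩⟩
    obtain ⟨e1, e2, e3⟩ := h2 (by linarith)
    exact ⟨e1, e3, e2⟩
  · obtain ⟨h1, h2⟩ := LobachevskyAux.main_sorted hC hac hab (by linarith)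
    refine ⟨by linarith, ⟨fun h => ?_, hback⟩⟩
    obtain ⟨e1, e2, e3⟩ := h2 (by linarith)
    exact ⟨e2, e3, e1⟩
  · obtain ⟨h1, h2⟩ := LobachevskyAux.main_sorted hB hab hac (by linarith)
    refine ⟨by linarith, ⟨fun h => ?_, hback⟩⟩
    obtain ⟨e1, e2, e3⟩ := h2 (by linarith)
    exact ⟨e2, e1, e3⟩
  · obtain ⟨h1, h2⟩ := LobachevskyAux.main_sorted hB hbc hac (by linarith)
    refine ⟨by linarith, ⟨fun h => ?_, hback⟩⟩
    obtain ⟨e1, e2, e3⟩ := h2 (by linarith)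
    exact ⟨e3, e1, e2⟩
  · obtain ⟨h1, h2⟩ := LobachevskyAux.main_sorted hC hbc hab (by linarith)
    refine ⟨by linarith, ⟨fun h => ?_, hback⟩⟩
    obtain ⟨e1, e2, e3⟩ := h2 (by linarith)
    exact ⟨e3, e2, e1⟩
  · obtain ⟨h1, h2⟩ := LobachevskyAux.main_sorted hC hbc hab (by linarith)
    refine ⟨by linarith, ⟨fun h => ?_, hback⟩⟩
    obtain ⟨e1, e2, e3⟩ := h2 (by linarith)
    exact ⟨e3, e2, e1⟩
end

section
/- For the edges of a symmetric hyperbolic tetrahedron T(A,B,C) with finite vertices, the sine rule holds: sin A / sinh l_A = sin B / sinh l_B = sin C / sinh l_C, where l_A, l_B, l_C are the lengths of the edges with dihedral angles A, B, C respectively, and the common value equals tan θ with θ as in the Derevnin–Mednykh–Pashkevich formula. -/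
open Real

/-- The Minkowski bilinear form of signature (3,1) on `ℝ⁴`. -/
def mink (x y : Fin 4 → ℝ) : ℝ := x 0 * y 0 + x 1 * y 1 + x 2 * y 2 - x 3 * y 3

namespace SymTet

open Matrix

theorem det_fin_four' (A : Matrix (Fin 4) (Fin 4) ℝ) :
    A.det = A 0 0 * (A 1 1*A 2 2*A 3 3 - A 1 1*A 2 3*A 3 2 - A 1 2*A 2 1*A 3 3
      + A 1 2*A 2 3*A 3 1 + A 1 3*A 2 1*A 3 2 - A 1 3*A 2 2*A 3 1)
    - A 0 1 * (A 1 0*A 2 2*A 3 3 - A 1 0*A 2 3*A 3 2 - A 1 2*A 2 0*A 3 3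
      + A 1 2*A 2 3*A 3 0 + A 1 3*A 2 0*A 3 2 - A 1 3*A 2 2*A 3 0)
    + A 0 2 * (A 1 0*A 2 1*A 3 3 - A 1 0*A 2 3*A 3 1 - A 1 1*A 2 0*A 3 3
      + A 1 1*A 2 3*A 3 0 + A 1 3*A 2 0*A 3 1 - A 1 3*A 2 1*A 3 0)
    - A 0 3 * (A 1 0*A 2 1*A 3 2 - A 1 0*A 2 2*A 3 1 - A 1 1*A 2 0*A 3 2
      + A 1 1*A 2 2*A 3 0 + A 1 2*A 2 0*A 3 1 - A 1 2*A 2 1*A 3 0) := by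
  rw [Matrix.det_succ_row_zero]
  simp [Fin.sum_univ_succ, Matrix.det_fin_three, Matrix.submatrix_apply, Fin.succAbove,
    show (Fin.succ 2 : Fin 4) = 3 from rfl,
    show ((2 : Fin 3).castSucc : Fin 4) = 2 from rfl]
  ring

def Jm : Matrix (Fin 4) (Fin 4) ℝ := Matrix.diagonal ![1,1,1,-1]

lemma mink_matrix (f g : Fin 4 → Fin 4 → ℝ) :
    Matrix.of f * Jm * (Matrix.of g)ᵀ = Matrix.of (fun i j => mink (f i) (g j)) := by
  ext i j
  simp [Matrix.mul_apply, Fin.sum_univ_four, Jm, mink, Matrix.diagonal]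
  ring

lemma JJ : Jm * Jm = 1 := by
  ext i j
  fin_cases i <;> fin_cases j <;>
  simp [Matrix.mul_apply, Fin.sum_univ_four, Jm, Matrix.one_apply, Matrix.diagonal]

lemma Jt : Jmᵀ = Jm := by
  simp [Jm, Matrix.diagonal_transpose]

lemma detJ : Jm.det = -1 := by
  simp [Jm, Matrix.det_diagonal, Fin.prod_univ_four]

noncomputable section
variable (a b c : ℝ)

def Gmat : Matrix (Fin 4) (Fin 4) ℝ :=
  !![1,-a,-b,-c; -a,1,-c,-b; -b,-c,1,-a; -c,-b,-a,1]

def Pq : ℝ := (1-a+b+c)*(1+a-b+c)*(1+a+b-c)*(-1+a+b+c)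
def Mq : ℝ := 1 - a^2 - b^2 - c^2 - 2*a*b*c
def qA : ℝ := a*(1-a^2+b^2+c^2)+2*b*c
def qB : ℝ := b*(1+a^2-b^2+c^2)+2*a*c
def qC : ℝ := c*(1+a^2+b^2-c^2)+2*a*b

def Umat : Matrix (Fin 4) (Fin 4) ℝ :=
  !![Mq a b c, qA a b c, qB a b c, qC a b c;
     qA a b c, Mq a b c, qC a b c, qB a b c;
     qB a b c, qC a b c, Mq a b c, qA a b c;
     qC a b c, qB a b c, qA a b c, Mq a b c]

lemma detG : (Gmat a b c).det = -(Pq a b c) := by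
  rw [det_fin_four']
  norm_num [Gmat, Pq, Matrix.cons_val_zero, Matrix.cons_val_one, Matrix.cons_val_two, Matrix.cons_val_three, Matrix.head_cons, Matrix.tail_cons]
  ring

lemma GU : Gmat a b c * Umat a b c = (-(Pq a b c)) • (1 : Matrix (Fin 4) (Fin 4) ℝ) := by
  ext i j
  fin_cases i <;> fin_cases j <;>
    simp [Gmat, Umat, Matrix.mul_apply, Fin.sum_univ_four, Matrix.one_apply,
      Pq, Mq, qA, qB, qC] <;> ring

lemma gram_key (n p : Fin 4 → Fin 4 → ℝ)
    (hP : Pq a b c ≠ 0)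
    (hGram : Matrix.of (fun i j => mink (n i) (n j)) = Gmat a b c)
    (hincid : ∀ i j, i ≠ j → mink (p i) (n j) = 0) (i j : Fin 4) :
    mink (p i) (p j) =
      mink (p i) (n i) * ((-(Pq a b c))⁻¹ * Umat a b c i j) * mink (p j) (n j) := by
  set N := Matrix.of n with hNdef
  set Pm := Matrix.of p with hPmdef
  set t : Fin 4 → ℝ := fun k => mink (p k) (n k) with ht
  have hG : N * Jm * Nᵀ = Gmat a b c := (mink_matrix n n).trans hGram
  have hdet : N.det ^ 2 = Pq a b c := by
    have h1 : (N * Jm * Nᵀ).det = -(Pq a b c) := by rw [hG, detG]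
    rw [Matrix.det_mul, Matrix.det_mul, detJ, Matrix.det_transpose] at h1
    linear_combination -h1
  have hNd : IsUnit N.det := isUnit_iff_ne_zero.mpr (fun h => hP (by rw [← hdet, h]; ring))
  have hNTd : IsUnit Nᵀ.det := by rwa [Matrix.det_transpose]
  have JJ' : ∀ X : Matrix (Fin 4) (Fin 4) ℝ, Jm * (Jm * X) = X := by
    intro X; rw [← Matrix.mul_assoc, JJ, Matrix.one_mul]
  have hT : Pm * Jm * Nᵀ = Matrix.diagonal t := by
    rw [hPmdef, hNdef, mink_matrix p n]
    ext i' j'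
    rcases eq_or_ne i' j' with rfl | h
    · simp [Matrix.diagonal_apply_eq, ht]
    · simp [Matrix.diagonal_apply_ne _ h, hincid _ _ h]
  have hPm : Pm = Matrix.diagonal t * (Nᵀ)⁻¹ * Jm := by
    have h2 : Pm * Jm = Matrix.diagonal t * (Nᵀ)⁻¹ := by
      rw [← hT, Matrix.mul_nonsing_inv_cancel_right _ _ hNTd]
    calc Pm = Pm * Jm * Jm := by rw [Matrix.mul_assoc, JJ, Matrix.mul_one]
    _ = _ := by rw [h2]
  have hW : Gmat a b c * ((Nᵀ)⁻¹ * (Jm * N⁻¹)) = 1 := by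
    rw [← hG]
    simp only [Matrix.mul_assoc]
    rw [Matrix.mul_nonsing_inv_cancel_left _ _ hNTd, JJ',
      Matrix.mul_nonsing_inv _ hNd]
  have hPne : (-(Pq a b c)) ≠ 0 := by simpa using hP
  have hU1 : Gmat a b c * ((-(Pq a b c))⁻¹ • Umat a b c) = 1 := by
    rw [Matrix.mul_smul, GU, smul_smul, inv_mul_cancel₀ hPne, one_smul]
  have hWU : (Nᵀ)⁻¹ * (Jm * N⁻¹) = (-(Pq a b c))⁻¹ • Umat a b c := by
    have h3 := mul_eq_one_comm.mp hU1
    calc (Nᵀ)⁻¹ * (Jm * N⁻¹)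
        = ((-(Pq a b c))⁻¹ • Umat a b c * Gmat a b c) * ((Nᵀ)⁻¹ * (Jm * N⁻¹)) := by
          rw [h3, Matrix.one_mul]
      _ = (-(Pq a b c))⁻¹ • Umat a b c * (Gmat a b c * ((Nᵀ)⁻¹ * (Jm * N⁻¹))) := by
          rw [Matrix.mul_assoc]
      _ = (-(Pq a b c))⁻¹ • Umat a b c := by rw [hW, Matrix.mul_one]
  have hPmT : Pmᵀ = Jm * (N⁻¹ * Matrix.diagonal t) := by
    rw [hPm, Matrix.transpose_mul, Matrix.transpose_mul, Jt, Matrix.transpose_nonsing_inv,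
      Matrix.transpose_transpose, Matrix.diagonal_transpose]
  have hkey : Pm * Jm * Pmᵀ =
      Matrix.diagonal t * ((-(Pq a b c))⁻¹ • Umat a b c) * Matrix.diagonal t := by
    rw [hPmT, ← hWU, hPm]
    simp only [Matrix.mul_assoc, JJ']
  have h5 : Matrix.of (fun i j => mink (p i) (p j)) =
      Matrix.diagonal t * ((-(Pq a b c))⁻¹ • Umat a b c) * Matrix.diagonal t :=
    (mink_matrix p p).symm.trans hkey
  have h6 := congrFun (congrFun h5 i) j
  simp only [Matrix.of_apply] at h6
  rw [h6, Matrix.mul_diagonal, Matrix.diagonal_mul, Matrix.smul_apply, smul_eq_mul]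

end

lemma mink_comm (x y : Fin 4 → ℝ) : mink x y = mink y x := by
  simp only [mink]; ring

lemma poseq {x y : ℝ} (hx : 0 < x) (hy : 0 < y) (h : x^2 = y^2) : x = y := by
  nlinarith [sq_nonneg (x - y), sq_nonneg (x + y)]

lemma edge_rule (s q M P l θ : ℝ) (hM : 0 < M) (hP : 0 < P) (hs : 0 < s)
    (hl : 0 < l) (hcosh : Real.cosh l * M = q) (hq : q^2 - M^2 = P * s^2)
    (htan : Real.tan θ = M / Real.sqrt P) : s / Real.sinh l = Real.tan θ := by
  have hsinh : 0 < Real.sinh l := Real.sinh_pos_iff.mpr hl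
  have hs2 : Real.sinh l ^ 2 * M ^ 2 = P * s ^ 2 := by
    linear_combination (Real.cosh l * M + q) * hcosh - M^2 * (Real.cosh_sq l) + hq
  have hsqP : 0 < Real.sqrt P := Real.sqrt_pos.mpr hP
  have hPs : Real.sqrt P ^ 2 = P := Real.sq_sqrt hP.le
  rw [htan, div_eq_div_iff (ne_of_gt hsinh) (ne_of_gt hsqP)]
  exact poseq (mul_pos hs hsqP) (mul_pos hM hsinh)
    (by rw [mul_pow, mul_pow, hPs]; linear_combination -hs2)

end SymTet


open SymTet

set_option maxHeartbeats 1000000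

/-- The sine rule for a symmetric hyperbolic tetrahedron `T(A,B,C)` with finite vertices
(acute angles, `A + B + C > π`).  The tetrahedron is realized in Minkowski space by unit
spacelike face normals `n 0, …, n 3` (face `i` opposite vertex `i`, opposite edges carrying
equal dihedral angles `A, B, C`) and by timelike unit vertex vectors `p 0, …, p 3`, vertex `i`
lying on the three faces `j ≠ i`.  If `l_A, l_B, l_C` are the lengths of the edges with
dihedral angles `A, B, C` (so `cosh l_A = -⟨p₀,p₁⟩` etc.), and `θ ∈ (0, π/2)` is the parameter
of the Derevnin–Mednykh–Pashkevich formula, then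
`sin A / sinh l_A = sin B / sinh l_B = sin C / sinh l_C = tan θ`. -/
theorem symmetric_tetrahedron_sine_rule (A B C θ lA lB lC : ℝ)
    (hA : A ∈ Set.Ioo 0 (π / 2)) (hB : B ∈ Set.Ioo 0 (π / 2)) (hC : C ∈ Set.Ioo 0 (π / 2))
    (hsum : π < A + B + C)
    (hθ : θ ∈ Set.Ioo 0 (π / 2))
    (htan : Real.tan θ =
      (1 - Real.cos A ^ 2 - Real.cos B ^ 2 - Real.cos C ^ 2 -
          2 * Real.cos A * Real.cos B * Real.cos C) /
        Real.sqrt ((1 - Real.cos A + Real.cos B + Real.cos C) *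
          (1 + Real.cos A - Real.cos B + Real.cos C) *
          (1 + Real.cos A + Real.cos B - Real.cos C) *
          (-1 + Real.cos A + Real.cos B + Real.cos C)))
    (n p : Fin 4 → Fin 4 → ℝ)
    (hn : ∀ i, mink (n i) (n i) = 1)
    (hA23 : mink (n 2) (n 3) = -Real.cos A) (hA01 : mink (n 0) (n 1) = -Real.cos A)
    (hB13 : mink (n 1) (n 3) = -Real.cos B) (hB02 : mink (n 0) (n 2) = -Real.cos B)
    (hC12 : mink (n 1) (n 2) = -Real.cos C) (hC03 : mink (n 0) (n 3) = -Real.cos C)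
    (hp : ∀ i, mink (p i) (p i) = -1)
    (hincid : ∀ i j, i ≠ j → mink (p i) (n j) = 0)
    (hside : ∀ i, 0 < mink (p i) (n i))
    (hcone : ∀ i j, i ≠ j → mink (p i) (p j) < -1)
    (hlA : 0 < lA) (hlB : 0 < lB) (hlC : 0 < lC)
    (hcoshA : Real.cosh lA = -(mink (p 0) (p 1)))
    (hcoshB : Real.cosh lB = -(mink (p 0) (p 2)))
    (hcoshC : Real.cosh lC = -(mink (p 0) (p 3))) :
    Real.sin A / Real.sinh lA = Real.tan θ ∧
    Real.sin B / Real.sinh lB = Real.tan θ ∧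
    Real.sin C / Real.sinh lC = Real.tan θ := by
  obtain ⟨hθ1, hθ2⟩ := hθ
  have hpi := Real.pi_pos
  have hsA : 0 < Real.sin A := Real.sin_pos_of_pos_of_lt_pi hA.1 (by linarith [hA.2])
  have hsB : 0 < Real.sin B := Real.sin_pos_of_pos_of_lt_pi hB.1 (by linarith [hB.2])
  have hsC : 0 < Real.sin C := Real.sin_pos_of_pos_of_lt_pi hC.1 (by linarith [hC.2])
  set a := Real.cos A with ha
  set b := Real.cos B with hb
  set c := Real.cos C with hc
  have htanP : 0 < Real.tan θ := Real.tan_pos_of_pos_of_lt_pi_div_two hθ1 hθ2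
  have htan' : Real.tan θ = Mq a b c / Real.sqrt (Pq a b c) := by
    simp only [Mq, Pq]; exact htan
  have hPpos : 0 < Pq a b c := by
    rcases le_or_gt (Pq a b c) 0 with h | h
    · exfalso
      rw [Real.sqrt_eq_zero'.mpr (by simpa using h), div_zero] at htan'
      linarith
    · exact h
  have hPne : Pq a b c ≠ 0 := ne_of_gt hPpos
  have hsqP : 0 < Real.sqrt (Pq a b c) := Real.sqrt_pos.mpr hPpos
  have hMpos : 0 < Mq a b c := by
    have h1 : Mq a b c = Real.tan θ * Real.sqrt (Pq a b c) := by
      rw [htan', div_mul_cancel₀ _ (ne_of_gt hsqP)]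
    rw [h1]; positivity
  have hMne : Mq a b c ≠ 0 := ne_of_gt hMpos
  have hA10 : mink (n 1) (n 0) = -a := (mink_comm _ _).trans hA01
  have hA32 : mink (n 3) (n 2) = -a := (mink_comm _ _).trans hA23
  have hB31 : mink (n 3) (n 1) = -b := (mink_comm _ _).trans hB13
  have hB20 : mink (n 2) (n 0) = -b := (mink_comm _ _).trans hB02
  have hC21 : mink (n 2) (n 1) = -c := (mink_comm _ _).trans hC12
  have hC30 : mink (n 3) (n 0) = -c := (mink_comm _ _).trans hC03
  have hGram : Matrix.of (fun i j => mink (n i) (n j)) = Gmat a b c := by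
    ext i j
    fin_cases i <;> fin_cases j <;>
      simp only [Matrix.of_apply, Gmat, Matrix.cons_val', Matrix.cons_val_zero,
        Matrix.cons_val_one, Matrix.head_cons, Matrix.empty_val', Matrix.cons_val_fin_one,
        Matrix.head_fin_const, Matrix.cons_val_two, Matrix.tail_cons, Matrix.cons_val_three,
        Matrix.head_fin_const] <;>
      first
        | exact hn _ | exact hA01 | exact hA10 | exact hA23 | exact hA32
        | exact hB02 | exact hB20 | exact hB13 | exact hB31
        | exact hC03 | exact hC30 | exact hC12 | exact hC21
  have key := gram_key a b c n p hPne hGram hincid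
  have e00 : Umat a b c 0 0 = Mq a b c := rfl
  have e11 : Umat a b c 1 1 = Mq a b c := rfl
  have e22 : Umat a b c 2 2 = Mq a b c := rfl
  have e33 : Umat a b c 3 3 = Mq a b c := rfl
  have e01 : Umat a b c 0 1 = qA a b c := rfl
  have e02 : Umat a b c 0 2 = qB a b c := rfl
  have e03 : Umat a b c 0 3 = qC a b c := rfl
  have hPne' : (-(Pq a b c)) ≠ 0 := neg_ne_zero.mpr hPne
  have key' : ∀ i j, mink (p i) (p j) * (-(Pq a b c)) =
      mink (p i) (n i) * Umat a b c i j * mink (p j) (n j) := by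
    intro i j
    rw [key i j]
    linear_combination (mink (p i) (n i) * Umat a b c i j * mink (p j) (n j)) *
      (inv_mul_cancel₀ hPne')
  have hdiag : ∀ i : Fin 4, Umat a b c i i = Mq a b c →
      mink (p i) (n i) ^ 2 * Mq a b c = Pq a b c := by
    intro i hUi
    have e := key' i i
    rw [hp i, hUi] at e
    linear_combination -e
  have ht0 : mink (p 0) (n 0) ^ 2 * Mq a b c = Pq a b c := hdiag 0 e00
  have ht1 : mink (p 1) (n 1) ^ 2 * Mq a b c = Pq a b c := hdiag 1 e11
  have ht2 : mink (p 2) (n 2) ^ 2 * Mq a b c = Pq a b c := hdiag 2 e22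
  have ht3 : mink (p 3) (n 3) ^ 2 * Mq a b c = Pq a b c := hdiag 3 e33
  have hteq1 : mink (p 1) (n 1) = mink (p 0) (n 0) :=
    poseq (hside 1) (hside 0) (mul_right_cancel₀ hMne (ht1.trans ht0.symm))
  have hteq2 : mink (p 2) (n 2) = mink (p 0) (n 0) :=
    poseq (hside 2) (hside 0) (mul_right_cancel₀ hMne (ht2.trans ht0.symm))
  have hteq3 : mink (p 3) (n 3) = mink (p 0) (n 0) :=
    poseq (hside 3) (hside 0) (mul_right_cancel₀ hMne (ht3.trans ht0.symm))
  have EA : mink (p 0) (p 1) * Pq a b c = -(mink (p 0) (n 0) ^ 2 * qA a b c) := by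
    have e := key' 0 1
    rw [e01, hteq1] at e
    linear_combination -e
  have EB : mink (p 0) (p 2) * Pq a b c = -(mink (p 0) (n 0) ^ 2 * qB a b c) := by
    have e := key' 0 2
    rw [e02, hteq2] at e
    linear_combination -e
  have EC : mink (p 0) (p 3) * Pq a b c = -(mink (p 0) (n 0) ^ 2 * qC a b c) := by
    have e := key' 0 3
    rw [e03, hteq3] at e
    linear_combination -e
  have cancelP : ∀ x : ℝ, x * Pq a b c = 0 → x = 0 := by
    intro x hx
    rcases mul_eq_zero.mp hx with h | h
    · exact h
    · exact absurd h hPne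
  have cA : Real.cosh lA * Mq a b c = qA a b c := by
    have h0 : (Real.cosh lA * Mq a b c - qA a b c) * Pq a b c = 0 := by
      linear_combination (Mq a b c * Pq a b c) * hcoshA - Mq a b c * EA
        + qA a b c * ht0
    linear_combination cancelP _ h0
  have cB : Real.cosh lB * Mq a b c = qB a b c := by
    have h0 : (Real.cosh lB * Mq a b c - qB a b c) * Pq a b c = 0 := by
      linear_combination (Mq a b c * Pq a b c) * hcoshB - Mq a b c * EB
        + qB a b c * ht0
    linear_combination cancelP _ h0
  have cC : Real.cosh lC * Mq a b c = qC a b c := by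
    have h0 : (Real.cosh lC * Mq a b c - qC a b c) * Pq a b c = 0 := by
      linear_combination (Mq a b c * Pq a b c) * hcoshC - Mq a b c * EC
        + qC a b c * ht0
    linear_combination cancelP _ h0
  have hsin2A : Real.sin A ^ 2 = 1 - a ^ 2 := by
    rw [ha]; linear_combination Real.sin_sq_add_cos_sq A
  have hsin2B : Real.sin B ^ 2 = 1 - b ^ 2 := by
    rw [hb]; linear_combination Real.sin_sq_add_cos_sq B
  have hsin2C : Real.sin C ^ 2 = 1 - c ^ 2 := by
    rw [hc]; linear_combination Real.sin_sq_add_cos_sq C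
  have hqA2 : qA a b c ^ 2 - Mq a b c ^ 2 = Pq a b c * Real.sin A ^ 2 := by
    rw [hsin2A]; simp only [qA, Mq, Pq]; ring
  have hqB2 : qB a b c ^ 2 - Mq a b c ^ 2 = Pq a b c * Real.sin B ^ 2 := by
    rw [hsin2B]; simp only [qB, Mq, Pq]; ring
  have hqC2 : qC a b c ^ 2 - Mq a b c ^ 2 = Pq a b c * Real.sin C ^ 2 := by
    rw [hsin2C]; simp only [qC, Mq, Pq]; ring
  exact ⟨edge_rule _ _ _ _ _ _ hMpos hPpos hsA hlA cA hqA2 htan',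
    edge_rule _ _ _ _ _ _ hMpos hPpos hsB hlB cB hqB2 htan',
    edge_rule _ _ _ _ _ _ hMpos hPpos hsC hlC cC hqC2 htan'⟩
end

section
/- For g ≥ 2 and k ≥ 0, any ideal triangulation of a compact orientable 3-manifold M whose boundary is the disjoint union of a genus-g surface Σ_g and k tori contains at least g + k tetrahedra. -/
/-- A simplicial face-pairing of `n` tetrahedra: the `4n` faces (a face of tetrahedron `t` is
labeled by the opposite vertex `i`, i.e. by `(t, i)`) are glued in pairs (`pair` is a
fixed-point-free involution), and each face is glued to its partner via a simplicial map,
encoded by the induced vertex bijection `glue f : Fin 4 ≃ Fin 4` (which sends the vertex `f.2`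
opposite the face `f` to the vertex opposite the partner face). -/
structure FacePairing (n : ℕ) where
  pair : Equiv.Perm (Fin n × Fin 4)
  pair_invol : ∀ f, pair (pair f) = f
  pair_ne : ∀ f, pair f ≠ f
  glue : Fin n × Fin 4 → Fin 4 ≃ Fin 4
  glue_vertex : ∀ f, glue f f.2 = (pair f).2
  glue_compat : ∀ f, glue (pair f) = (glue f).symm

namespace FacePairing

/-- A face-pairing is oriented when all gluing maps are orientation-reversing, i.e. odd
permutations of the vertices (the tetrahedra all being coherently oriented); the resulting
ideal triangulation then yields an orientable manifold. -/
def Oriented {n : ℕ} (P : FacePairing n) : Prop :=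
  ∀ f, Equiv.Perm.sign (P.glue f) = -1

variable {n : ℕ} (P : FacePairing n)

/-- One step of the identification of vertex instances `(tetrahedron, vertex)` induced by the
face gluings: glue across the face `(a.1, i)` containing the vertex `a.2` (i.e. `i ≠ a.2`). -/
def vrel (a b : Fin n × Fin 4) : Prop :=
  ∃ i : Fin 4, i ≠ a.2 ∧ b = ((P.pair (a.1, i)).1, P.glue (a.1, i) a.2)

/-- Vertices of the glued complex: instances modulo the identifications. -/
def VertexClass := Quot P.vrel

/-- A corner instance `(t, v, w)`: the end at the vertex `v` of the edge `vw` of tetrahedron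
`t`.  These are the triangle-vertices of the boundary (link) surfaces. -/
def Corner (n : ℕ) := {c : Fin n × Fin 4 × Fin 4 // c.2.1 ≠ c.2.2}

/-- One step of the identification of corners induced by the face gluings. -/
def crel (a b : Corner n) : Prop :=
  ∃ i : Fin 4, i ≠ a.1.2.1 ∧ i ≠ a.1.2.2 ∧
    b.1 = ((P.pair (a.1.1, i)).1, P.glue (a.1.1, i) a.1.2.1, P.glue (a.1.1, i) a.1.2.2)

/-- Vertices of the links (boundary surfaces): corners modulo identification. -/
def LinkVertexClass := Quot P.crel

/-- The number of link triangles in the boundary component corresponding to the vertex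
class `c`: one triangle for each vertex instance in the class. -/
noncomputable def linkTriangles (c : P.VertexClass) : ℕ :=
  Nat.card {a : Fin n × Fin 4 // Quot.mk P.vrel a = c}

/-- The number of vertices of the link surface of the vertex class `c`. -/
noncomputable def linkVertices (c : P.VertexClass) : ℕ :=
  Nat.card {l : P.LinkVertexClass //
    ∃ a : Corner n, Quot.mk P.crel a = l ∧ Quot.mk P.vrel (a.1.1, a.1.2.1) = c}

/-- Twice the Euler characteristic of the boundary component corresponding to the vertex class
`c`: the link is a closed surface with `F` triangles, `3F/2` edges and `V` vertices, so
`2χ = 2V - 3F + 2F = 2V - F`. -/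
noncomputable def eulerChar2 (c : P.VertexClass) : ℤ :=
  2 * (P.linkVertices c : ℤ) - (P.linkTriangles c : ℤ)

/-- The boundary of the glued manifold is `Σ_g ⊔ (k tori)`: there are `1 + k` boundary
components (vertex classes), one of Euler characteristic `2 - 2g` and `k` of Euler
characteristic `0`. -/
def BoundaryIs (g k : ℕ) : Prop :=
  Nat.card P.VertexClass = 1 + k ∧
  ∃ c₀ : P.VertexClass, P.eulerChar2 c₀ = 2 * (2 - 2 * (g : ℤ)) ∧
    ∀ c : P.VertexClass, c ≠ c₀ → P.eulerChar2 c = 0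

/-! ### auxiliary development -/

/-- table of the "forward" third vertex: `Ffn u w` is the vertex `x` such that
`(u,w,x,y)` is an even permutation of `(0,1,2,3)`. -/
def Ffn : Fin 4 → Fin 4 → Fin 4 :=
  ![![0,2,3,1], ![3,0,0,2], ![1,3,0,0], ![2,0,1,0]]

lemma Ffn_sign (g : Equiv.Perm (Fin 4)) (hg : Equiv.Perm.sign g = -1) (u w : Fin 4)
    (h : u ≠ w) : Ffn (g u) (g w) = g (Ffn w u) := by revert g hg u w h; decide

lemma Ffn_flip (g : Equiv.Perm (Fin 4)) (hg : Equiv.Perm.sign g = -1) (u w : Fin 4)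
    (h : u ≠ w) (h1 : g u = w) (h2 : g w = u) : g (Ffn u w) = Ffn u w := by
  revert g hg u w h h1 h2; decide

lemma Ffn_cases (u w i : Fin 4) (h : u ≠ w) (h1 : i ≠ u) (h2 : i ≠ w) :
    i = Ffn u w ∨ i = Ffn w u := by revert u w i h h1 h2; decide

lemma Ffn_ne (u w : Fin 4) (h : u ≠ w) : Ffn u w ≠ u ∧ Ffn u w ≠ w := by
  revert u w h; decide

variable {P}

/-- swap the two edge endpoints of a corner. -/
def swapC (a : Corner n) : Corner n := ⟨(a.1.1, a.1.2.2, a.1.2.1), Ne.symm a.2⟩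

lemma swapC_swapC (a : Corner n) : swapC (swapC a) = a := rfl

/-- forward rotation around the edge end. -/
def fwd (P : FacePairing n) (a : Corner n) : Corner n :=
  ⟨((P.pair (a.1.1, Ffn a.1.2.1 a.1.2.2)).1,
    P.glue (a.1.1, Ffn a.1.2.1 a.1.2.2) a.1.2.1,
    P.glue (a.1.1, Ffn a.1.2.1 a.1.2.2) a.1.2.2),
    fun h => a.2 ((P.glue _).injective h)⟩

def bwd (P : FacePairing n) (a : Corner n) : Corner n := swapC (P.fwd (swapC a))

lemma bwd_fwd (hor : P.Oriented) (a : Corner n) : P.bwd (P.fwd a) = a := by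
  obtain ⟨⟨t, u, w⟩, hne⟩ := a
  simp only [fwd, bwd, swapC]
  set x := Ffn u w with hx
  set f : Fin n × Fin 4 := (t, x) with hf
  set g := P.glue f with hg
  have hne' : u ≠ w := hne
  -- the forward face of the swapped image corner
  have h1 : Ffn (g w) (g u) = g x := by
    rw [Ffn_sign g (hor f) w u (Ne.symm hne'), ← hx]
  -- identify the face used by `bwd` with the partner face
  have h2 : ((P.pair f).1, Ffn (g w) (g u)) = P.pair f := by
    rw [h1, show g x = (P.pair f).2 from P.glue_vertex f]
  apply Subtype.ext
  simp only [h2, P.glue_compat f, ← hg, P.pair_invol f, hf]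
  simp
  rw [← hx, ← hf, ← hg, h2, P.glue_compat f, P.pair_invol f, ← hg]
  simp [hf]

lemma fwd_bwd (hor : P.Oriented) (a : Corner n) : P.fwd (P.bwd a) = a := by
  simpa only [bwd, swapC_swapC] using congrArg swapC (bwd_fwd hor (swapC a))

instance : Finite (Corner n) := by unfold Corner; infer_instance

/-- the forward rotation as a permutation of corners. -/
def eperm (P : FacePairing n) (hor : P.Oriented) : Equiv.Perm (Corner n) :=
  ⟨P.fwd, P.bwd, bwd_fwd hor, fwd_bwd hor⟩

/-- the swap as a permutation of corners. -/
def sperm : Equiv.Perm (Corner n) := ⟨swapC, swapC, swapC_swapC, swapC_swapC⟩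

lemma sperm_conj (hor : P.Oriented) :
    (sperm : Equiv.Perm (Corner n)) * P.eperm hor * sperm = (P.eperm hor)⁻¹ := by
  ext a
  show swapC (P.fwd (swapC a)) = P.bwd a
  rfl

lemma sperm_conj_zpow (hor : P.Oriented) (m : ℤ) :
    (sperm : Equiv.Perm (Corner n)) * (P.eperm hor) ^ m * sperm = (P.eperm hor) ^ (-m) := by
  have hs : (sperm : Equiv.Perm (Corner n))⁻¹ = sperm := by
    ext a; exact congrArg (fun e => (Equiv.symm e) a) rfl
  have := map_zpow (MulAut.conj (sperm : Equiv.Perm (Corner n))) (P.eperm hor) m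
  simp only [MulAut.conj_apply, hs] at this
  rw [this, sperm_conj hor, zpow_neg, inv_zpow]

/-- a `crel` step moves one step forward or backward around the edge end. -/
lemma crel_step (hor : P.Oriented) {a b : Corner n} (h : P.crel a b) :
    b = P.fwd a ∨ a = P.fwd b := by
  obtain ⟨i, hi1, hi2, hb⟩ := h
  rcases Ffn_cases a.1.2.1 a.1.2.2 i a.2 hi1 hi2 with hc | hc
  · left
    apply Subtype.ext
    rw [hb, hc]
    rfl
  · right
    have hb' : b = P.bwd a := by
      apply Subtype.ext
      rw [hb, hc]
      rfl
    rw [hb', fwd_bwd hor]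

/-- equivalent corners lie in the same forward orbit. -/
lemma orbit_of_eqvGen (hor : P.Oriented) {a b : Corner n} (h : Relation.EqvGen (P.crel) a b) :
    ∃ m : ℤ, b = ((P.eperm hor) ^ m) a := by
  induction h with
  | rel x y hxy =>
      rcases crel_step hor hxy with h | h
      · exact ⟨1, by rw [zpow_one]; exact h⟩
      · refine ⟨-1, ?_⟩
        have : x = (P.eperm hor) y := h
        rw [this]
        simp
  | refl x => exact ⟨0, by simp⟩
  | symm x y _ ih =>
      obtain ⟨m, hm⟩ := ih
      refine ⟨-m, ?_⟩
      rw [hm]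
      simp [← Equiv.Perm.mul_apply, ← zpow_add]
  | trans x y z _ _ ih1 ih2 =>
      obtain ⟨m1, h1⟩ := ih1
      obtain ⟨m2, h2⟩ := ih2
      refine ⟨m2 + m1, ?_⟩
      rw [h2, h1]
      simp [← Equiv.Perm.mul_apply, ← zpow_add]

lemma swapC_ne (a : Corner n) : swapC a ≠ a := by
  intro h
  exact a.2 (congrArg (fun c => c.1.2.1) h).symm

lemma fwd_ne_swapC (hor : P.Oriented) (a : Corner n) : P.fwd a ≠ swapC a := by
  obtain ⟨⟨t, u, w⟩, hne⟩ := a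
  intro h
  have hne' : u ≠ w := hne
  set x := Ffn u w with hx
  set f : Fin n × Fin 4 := (t, x) with hf
  set g := P.glue f with hg
  have h1 : (P.pair f).1 = t := congrArg (fun c => c.1.1) h
  have h2 : g u = w := congrArg (fun c => c.1.2.1) h
  have h3 : g w = u := congrArg (fun c => c.1.2.2) h
  have h4 : g x = (P.pair f).2 := P.glue_vertex f
  have h5 : (P.pair f).2 ≠ x := by
    intro hc
    apply P.pair_ne f
    have : P.pair f = ((P.pair f).1, (P.pair f).2) := rfl
    rw [this, h1, hc]
  exact h5 (h4 ▸ Ffn_flip g (hor f) u w hne' h2 h3)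

/-- The key orientation fact: a corner is never glued to its own swap. -/
theorem no_sfix (hor : P.Oriented) (a : Corner n) :
    Quot.mk P.crel (swapC a) ≠ Quot.mk P.crel a := by
  intro h
  obtain ⟨m, hm⟩ := orbit_of_eqvGen hor (Quot.eqvGen_exact h)
  -- hm : a = (e ^ m) (swapC a)
  set e := P.eperm hor with he
  have swap_zpow : ∀ (j : ℤ) (b : Corner n), swapC ((e ^ j) b) = (e ^ (-j)) (swapC b) := by
    intro j b
    have h0 := congrArg (fun p : Equiv.Perm (Corner n) => p (swapC b)) (sperm_conj_zpow (P := P) hor j)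
    simp only [Equiv.Perm.mul_apply] at h0
    rw [show sperm (swapC b) = b from swapC_swapC b] at h0
    exact h0
  have hm' : swapC a = (e ^ (-m)) a := by
    have := congrArg swapC hm
    rw [swap_zpow m (swapC a), swapC_swapC] at this
    exact this
  rcases Int.even_or_odd m with ⟨j, hj⟩ | ⟨j, hj⟩
  · -- m = 2j : some corner is fixed by swap
    apply swapC_ne ((e ^ (-j)) a)
    rw [swap_zpow (-j) a, hm']
    simp only [← Equiv.Perm.mul_apply, ← zpow_add]
    congr 2
    omega
  · -- m = 2j+1 : some corner b has fwd b = swapC b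
    apply fwd_ne_swapC hor ((e ^ (-j-1)) a)
    have : P.fwd ((e ^ (-j-1)) a) = (e ^ (-j)) a := by
      show e ((e ^ (-j-1)) a) = _
      simp only [← Equiv.Perm.mul_apply, ← zpow_add, ← zpow_one_add]
      congr 2
      omega
    rw [this, swap_zpow (-j-1) a, hm']
    simp only [← Equiv.Perm.mul_apply, ← zpow_add]
    congr 2
    omega

instance : Finite P.VertexClass :=
  Finite.of_surjective (Quot.mk P.vrel) Quot.mk_surjective

instance : Finite P.LinkVertexClass :=
  Finite.of_surjective (Quot.mk P.crel) Quot.mk_surjective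

/-- the boundary component of a link vertex. -/
def comp (P : FacePairing n) : P.LinkVertexClass → P.VertexClass :=
  Quot.lift (fun a => Quot.mk P.vrel (a.1.1, a.1.2.1)) (by
    rintro a b ⟨i, hi1, hi2, hb⟩
    apply Quot.sound
    exact ⟨i, hi1, by rw [hb]⟩)

lemma comp_mk (a : Corner n) :
    P.comp (Quot.mk P.crel a) = Quot.mk P.vrel (a.1.1, a.1.2.1) := rfl

/-- the swap involution on link vertices. -/
def Sq (P : FacePairing n) : P.LinkVertexClass → P.LinkVertexClass :=
  Quot.lift (fun a => Quot.mk P.crel (swapC a)) (by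
    rintro a b ⟨i, hi1, hi2, hb⟩
    apply Quot.sound
    exact ⟨i, hi2, hi1, congrArg (fun p => (p.1, p.2.2, p.2.1)) hb⟩)

lemma Sq_mk (a : Corner n) : P.Sq (Quot.mk P.crel a) = Quot.mk P.crel (swapC a) := rfl

lemma Sq_Sq (l : P.LinkVertexClass) : P.Sq (P.Sq l) = l := by
  obtain ⟨a, rfl⟩ := Quot.exists_rep l
  rw [Sq_mk, Sq_mk, swapC_swapC]

lemma Sq_ne (hor : P.Oriented) (l : P.LinkVertexClass) : P.Sq l ≠ l := by
  obtain ⟨a, rfl⟩ := Quot.exists_rep l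
  rw [Sq_mk]
  exact no_sfix hor a

lemma Sq_injective : Function.Injective P.Sq := by
  intro l l' h
  rw [← Sq_Sq (P := P) l, ← Sq_Sq (P := P) l', h]

lemma linkVertices_eq (c : P.VertexClass) :
    P.linkVertices c = Nat.card {l : P.LinkVertexClass // P.comp l = c} := by
  apply Nat.card_congr
  apply Equiv.subtypeEquivRight
  intro l
  constructor
  · rintro ⟨a, rfl, hc⟩
    rw [comp_mk]; exact hc
  · intro hl
    obtain ⟨a, rfl⟩ := Quot.exists_rep l
    exact ⟨a, rfl, hl⟩

lemma fin4_ne_add_one : ∀ v : Fin 4, v ≠ v + 1 := by decide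

lemma comp_surjective : Function.Surjective P.comp := by
  intro c
  obtain ⟨⟨t, v⟩, rfl⟩ := Quot.exists_rep c
  exact ⟨Quot.mk P.crel ⟨(t, v, v + 1), fin4_ne_add_one v⟩, rfl⟩

lemma fin4_facts : ∀ v : Fin 4, v + 1 ≠ v ∧ v + 2 ≠ v ∧ v + 1 ≠ v + 2 := by decide

lemma sum_card_fiber {α β : Type*} [Fintype α] [Fintype β] (f : α → β) :
    ∑ b : β, Nat.card {a // f a = b} = Fintype.card α := by
  classical
  have h1 : ∀ b, Nat.card {a // f a = b} = (Finset.univ.filter (fun a => f a = b)).card := by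
    intro b; rw [Nat.card_eq_fintype_card, Fintype.card_subtype]
  simp_rw [h1]
  rw [← Finset.card_eq_sum_card_fiberwise (fun a _ => Finset.mem_univ (f a)), Finset.card_univ]

end FacePairing

open FacePairing

/-- Any ideal triangulation (oriented face-pairing of `n` tetrahedra) of a compact orientable
3-manifold whose boundary is the disjoint union of a genus-`g` surface (`g ≥ 2`) and `k` tori
contains at least `g + k` tetrahedra. -/
theorem min_tetrahedra (g k n : ℕ) (hg : 2 ≤ g) (P : FacePairing n)
    (hor : P.Oriented) (hb : P.BoundaryIs g k) : g + k ≤ n := by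
  classical
  haveI instU : Fintype P.VertexClass := Fintype.ofFinite _
  haveI instW : Fintype P.LinkVertexClass := Fintype.ofFinite _
  -- counting the triangles
  have hF : ∑ c : P.VertexClass, P.linkTriangles c = 4 * n := by
    have := sum_card_fiber (α := Fin n × Fin 4) (β := P.VertexClass) (Quot.mk P.vrel)
    rw [Fintype.card_prod, Fintype.card_fin, Fintype.card_fin, mul_comm] at this
    exact this
  -- counting the link vertices
  have h2 : ∀ c : P.VertexClass, P.linkVertices c =
      (Finset.univ.filter (fun l : P.LinkVertexClass => P.comp l = c)).card := by
    intro c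
    rw [linkVertices_eq, Nat.card_eq_fintype_card, Fintype.card_subtype]
  have hV : ∑ c : P.VertexClass, P.linkVertices c = Nat.card P.LinkVertexClass := by
    have := sum_card_fiber P.comp
    rw [← Nat.card_eq_fintype_card] at this
    rw [← this]
    exact Finset.sum_congr rfl (fun c _ => linkVertices_eq c)
  -- the Euler characteristic sum
  obtain ⟨hcardU, c₀, hc₀, hrest⟩ := hb
  have hχ : ∑ c : P.VertexClass, P.eulerChar2 c = 2 * (2 - 2 * (g : ℤ)) := by
    rw [Finset.sum_eq_single_of_mem c₀ (Finset.mem_univ c₀) (fun b _ hb => hrest b hb), hc₀]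
  have hχ2 : ∑ c : P.VertexClass, P.eulerChar2 c =
      2 * (Nat.card P.LinkVertexClass : ℤ) - 4 * (n : ℤ) := by
    unfold eulerChar2
    rw [Finset.sum_sub_distrib, ← Finset.mul_sum, ← Nat.cast_sum, ← Nat.cast_sum, hV, hF]
    push_cast
    ring
  -- the main inequality : at least 2 link vertices per component on average
  set Vc : P.VertexClass → ℕ := fun c => P.linkVertices c with hVc
  have hVc1 : ∀ c, 1 ≤ Vc c := by
    intro c
    obtain ⟨l, hl⟩ := P.comp_surjective c
    show 1 ≤ P.linkVertices c
    rw [linkVertices_eq]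
    haveI : Nonempty {l' : P.LinkVertexClass // P.comp l' = c} := ⟨⟨l, hl⟩⟩
    exact Nat.card_pos
  choose pk hpk using P.comp_surjective
  set D : Finset P.VertexClass := Finset.univ.filter (fun c => Vc c = 1) with hD
  have huniq : ∀ c ∈ D, ∀ l, P.comp l = c → l = pk c := by
    intro c hc l hl
    rw [hD, Finset.mem_filter] at hc
    have h1 : Nat.card {l' : P.LinkVertexClass // P.comp l' = c} = 1 := by
      rw [← linkVertices_eq]; exact hc.2
    obtain ⟨hsub, _⟩ := Nat.card_eq_one_iff_unique.mp h1
    exact congrArg Subtype.val (hsub.elim (⟨l, hl⟩ : {l' // P.comp l' = c}) ⟨pk c, hpk c⟩)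
  set d : P.VertexClass → P.VertexClass := fun c => P.comp (P.Sq (pk c)) with hd
  -- structure at a deficient component
  have hstruct : ∀ c ∈ D, d c ≠ c ∧
      ∃ m : P.LinkVertexClass, P.comp m = d c ∧ P.comp (P.Sq m) = d c := by
    intro c hc
    obtain ⟨a, ha⟩ := Quot.exists_rep (pk c)
    obtain ⟨⟨t, v, w⟩, hvw⟩ := a
    have hcomp : Quot.mk P.vrel (t, v) = c := by rw [← hpk c, ← ha]; rfl
    obtain ⟨hu1, hu2, hu12⟩ := fin4_facts v
    have hb1 : Quot.mk P.crel ⟨(t, v, v + 1), Ne.symm hu1⟩ = pk c :=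
      huniq c hc _ (by exact hcomp)
    have hb2 : Quot.mk P.crel ⟨(t, v, v + 2), Ne.symm hu2⟩ = pk c :=
      huniq c hc _ (by exact hcomp)
    have hS1 : P.Sq (pk c) = Quot.mk P.crel ⟨(t, v + 1, v), hu1⟩ := by
      rw [← hb1]; rfl
    have hS2 : P.Sq (pk c) = Quot.mk P.crel ⟨(t, v + 2, v), hu2⟩ := by
      rw [← hb2]; rfl
    have hd1 : d c = Quot.mk P.vrel (t, v + 1) := by
      show P.comp (P.Sq (pk c)) = _
      rw [hS1]; rfl
    have hd2 : d c = Quot.mk P.vrel (t, v + 2) := by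
      show P.comp (P.Sq (pk c)) = _
      rw [hS2]; rfl
    constructor
    · intro hdc
      have := huniq c hc (P.Sq (pk c)) hdc
      exact Sq_ne hor (pk c) this
    · refine ⟨Quot.mk P.crel ⟨(t, v + 1, v + 2), hu12⟩, ?_, ?_⟩
      · show Quot.mk P.vrel (t, v + 1) = d c
        exact hd1.symm
      · show Quot.mk P.vrel (t, v + 2) = d c
        exact hd2.symm
  have hdD : ∀ c ∈ D, d c ∉ D := by
    intro c hc hdc
    obtain ⟨hne, m, hm1, hm2⟩ := hstruct c hc
    have h1 : m = pk (d c) := huniq _ hdc m hm1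
    have h2 : P.Sq m = pk (d c) := huniq _ hdc _ hm2
    exact Sq_ne hor m (h2.trans h1.symm)
  -- the key inequality per non-deficient component
  have hkey : ∀ c' ∉ D, 2 + (D.filter (fun c => d c = c')).card ≤ Vc c' := by
    intro c' hc'
    have hVcf : Vc c' =
        (Finset.univ.filter (fun l : P.LinkVertexClass => P.comp l = c')).card := h2 c'
    rcases Finset.eq_empty_or_nonempty (D.filter (fun c => d c = c')) with he | ⟨c₁, hc₁⟩
    · rw [he, Finset.card_empty]
      have := hVc1 c'
      have hne1 : Vc c' ≠ 1 := by
        intro h; exact hc' (by rw [hD, Finset.mem_filter]; exact ⟨Finset.mem_univ _, h⟩)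
      omega
    · rw [Finset.mem_filter] at hc₁
      obtain ⟨hc₁D, hdc₁⟩ := hc₁
      obtain ⟨-, m, hm1, hm2⟩ := hstruct c₁ hc₁D
      rw [hdc₁] at hm1 hm2
      set A : Finset P.LinkVertexClass :=
        (D.filter (fun c => d c = c')).image (fun c => P.Sq (pk c)) with hA
      have hAcard : A.card = (D.filter (fun c => d c = c')).card := by
        rw [hA]
        apply Finset.card_image_of_injOn
        intro x _ y _ hxy
        have := Sq_injective (P := P) hxy
        rw [← hpk x, ← hpk y, this]
      have hmemA : ∀ x ∈ A, P.comp x = c' ∧ P.comp (P.Sq x) ∈ D := by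
        intro x hx
        rw [hA, Finset.mem_image] at hx
        obtain ⟨c, hcmem, rfl⟩ := hx
        rw [Finset.mem_filter] at hcmem
        refine ⟨hcmem.2, ?_⟩
        rw [Sq_Sq, hpk]
        exact hcmem.1
      have hmA : m ∉ A := by
        intro hm
        have := (hmemA m hm).2
        rw [hm2] at this
        exact hc' this
      have hSmA : P.Sq m ∉ A := by
        intro hm
        have := (hmemA _ hm).2
        rw [Sq_Sq, hm1] at this
        exact hc' this
      have hmSm : m ≠ P.Sq m := fun h => Sq_ne hor m h.symm
      have hsub : insert m (insert (P.Sq m) A) ⊆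
          Finset.univ.filter (fun l => P.comp l = c') := by
        intro x hx
        rw [Finset.mem_insert, Finset.mem_insert] at hx
        rw [Finset.mem_filter]
        refine ⟨Finset.mem_univ _, ?_⟩
        rcases hx with rfl | rfl | hx
        · exact hm1
        · exact hm2
        · exact (hmemA x hx).1
      have hcard : (insert m (insert (P.Sq m) A)).card =
          2 + (D.filter (fun c => d c = c')).card := by
        rw [Finset.card_insert_of_notMem (by
            rw [Finset.mem_insert]; push_neg; exact ⟨hmSm, hmA⟩),
          Finset.card_insert_of_notMem hSmA, hAcard]
        omega
      rw [hVcf, ← hcard]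
      exact Finset.card_le_card hsub
  -- summation
  set Dc : Finset P.VertexClass := Finset.univ.filter (fun c => ¬ (Vc c = 1)) with hDc
  have hDsplit : ∑ c : P.VertexClass, Vc c = ∑ c ∈ D, Vc c + ∑ c ∈ Dc, Vc c := by
    rw [hD, hDc, Finset.sum_filter_add_sum_filter_not]
  have hDsum : ∑ c ∈ D, Vc c = D.card := by
    calc ∑ c ∈ D, Vc c = ∑ c ∈ D, 1 :=
          Finset.sum_congr rfl (fun c hc => by
            rw [hD, Finset.mem_filter] at hc; exact hc.2)
      _ = D.card := by simp
  have hDmem : ∀ c' , c' ∈ Dc ↔ c' ∉ D := by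
    intro c'
    rw [hDc, hD, Finset.mem_filter, Finset.mem_filter]
    simp
  have hfib : D.card = ∑ c' ∈ Dc, (D.filter (fun c => d c = c')).card :=
    Finset.card_eq_sum_card_fiberwise (fun c hc => (hDmem (d c)).mpr (hdD c hc))
  have hDcsum : 2 * Dc.card + D.card ≤ ∑ c' ∈ Dc, Vc c' := by
    calc 2 * Dc.card + D.card
        = ∑ c' ∈ Dc, (2 + (D.filter (fun c => d c = c')).card) := by
          rw [Finset.sum_add_distrib, Finset.sum_const, smul_eq_mul, mul_comm, ← hfib]
      _ ≤ ∑ c' ∈ Dc, Vc c' :=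
          Finset.sum_le_sum (fun c' hc' => hkey c' ((hDmem c').mp hc'))
  have hcards : D.card + Dc.card = Nat.card P.VertexClass := by
    rw [Nat.card_eq_fintype_card, ← Finset.card_univ, hD, hDc,
      Finset.card_filter_add_card_filter_not]
  have hW : 2 * Nat.card P.VertexClass ≤ Nat.card P.LinkVertexClass := by
    have h4 : ∑ c : P.VertexClass, Vc c = Nat.card P.LinkVertexClass := hV
    omega
  -- final arithmetic
  rw [hχ2] at hχ
  rw [hcardU] at hW
  omega
end
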